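/- arXiv:2603.15783 — 2 statements merged into one kernel-verified Lean document; each statement's English description precedes it below -/
import Mathlib

section
/- Let (Ω, μ) be a probability space, K, M ≥ 1, and for each k = 1,…,K let B_k ∈ ℂ^{M×M}, let A_k : ℝ³ → ℂ^{M×M} be twice continuously differentiable, and let Ξ_k : Ω → ℂ^{M×M} be a random matrix whose entries are integrable with entrywise expectation E[Ξ_k] = A_k(v₀) B_k at a fixed point v₀ ∈ ℝ³. Define f : ℝ³ × Ω → ℝ by f(v, ω) = Σ_{k=1}^K ‖Ξ_k(ω) − A_k(v) B_k‖_F². Then for all coordinate indices i, j ∈ {1,2,3}, the expectation of the second partial derivative satisfies E[ (∂²f/∂v_i ∂v_j)(v₀, ·) ] = 2 Σ_{k=1}^K Re tr( (∂A_k/∂v_i)(v₀) · B_k B_kᴴ · ((∂A_k/∂v_j)(v₀))ᴴ ). (With B_k the positive semidefinite square root of C_k C_kᴴ, so that B_k B_kᴴ = C_k C_kᴴ, this gives the Fisher information matrix entries [J(v)]_{ij} = Σ_k tr(A_k^i(v) C_k C_kᴴ A_k^j(v)ᴴ) of Theorem 1, up to the real-parameter normalization constant.) -/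
open Matrix MeasureTheory BigOperators

attribute [local instance] Matrix.normedAddCommGroup Matrix.normedSpace

/-- Partial derivative of a real-valued function on `ℝ³` along the `i`-th
standard basis vector. -/
noncomputable def pd (i : Fin 3) (f : (Fin 3 → ℝ) → ℝ) (v : Fin 3 → ℝ) : ℝ :=
  fderiv ℝ f v (Pi.single i 1)

/-- Partial derivative of a matrix-valued function on `ℝ³` along the `i`-th
standard basis vector. -/
noncomputable def mpd {M : ℕ} (i : Fin 3)
    (A : (Fin 3 → ℝ) → Matrix (Fin M) (Fin M) ℂ) (v : Fin 3 → ℝ) :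
    Matrix (Fin M) (Fin M) ℂ :=
  fderiv ℝ A v (Pi.single i 1)

/-!
Differentiating `‖c - g v‖²` twice gives `2⟪∂ᵢg, ∂ⱼg⟫ - 2⟪c - g, ∂ᵢ∂ⱼg⟫`. The second term is
affine in the observation `c`, so its expectation vanishes at `v₀`, where the mean of each
entry `Ξₖ p q` is the model value `(Aₖ v₀ Bₖ) p q`. What remains, `2⟪∂ᵢg, ∂ⱼg⟫` summed over
all entries (with `ℂ` as a real inner product space), is `2 Re tr(∂ᵢAₖ Bₖ Bₖᴴ (∂ⱼAₖ)ᴴ)`.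
-/

open scoped RealInnerProductSpace

section Calculus

variable {E G : Type*} [NormedAddCommGroup E] [NormedSpace ℝ E]
  [NormedAddCommGroup G] [NormedSpace ℝ G]

theorem ContDiff.differentiable_fderiv_apply {g : E → G} (hg : ContDiff ℝ 2 g) (y : E) :
    Differentiable ℝ (fun w => fderiv ℝ g w y) :=
  ((hg.fderiv_right (m := 1) le_rfl).clm_apply contDiff_const).differentiable one_ne_zero

theorem fderiv_fderiv_finset_sum {ι : Type*} (s : Finset ι) {h : ι → E → G}
    (hh : ∀ m ∈ s, ContDiff ℝ 2 (h m)) (v x y : E) :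
    fderiv ℝ (fun w => fderiv ℝ (fun u => ∑ m ∈ s, h m u) w y) v x =
      ∑ m ∈ s, fderiv ℝ (fun w => fderiv ℝ (h m) w y) v x := by
  have hfirst : (fun w => fderiv ℝ (fun u => ∑ m ∈ s, h m u) w y) =
      fun w => ∑ m ∈ s, fderiv ℝ (h m) w y := by
    funext w
    rw [fderiv_fun_sum fun m hm => (hh m hm).differentiable two_ne_zero w, _root_.sum_apply]
  rw [hfirst, fderiv_fun_sum fun m hm => (hh m hm).differentiable_fderiv_apply y v,
    _root_.sum_apply]

end Calculus

section SquaredResidual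

variable {E F : Type*} [NormedAddCommGroup E] [NormedSpace ℝ E]
  [NormedAddCommGroup F] [InnerProductSpace ℝ F]

theorem fderiv_fderiv_norm_sub_sq {g : E → F} (hg : ContDiff ℝ 2 g) (c : F) (v x y : E) :
    fderiv ℝ (fun w => fderiv ℝ (fun u => ‖c - g u‖ ^ 2) w y) v x =
      2 * ⟪fderiv ℝ g v x, fderiv ℝ g v y⟫ -
        2 * ⟪c - g v, fderiv ℝ (fun w => fderiv ℝ g w y) v x⟫ := by
  have hg₁ : Differentiable ℝ g := hg.differentiable two_ne_zero
  have hres : Differentiable ℝ (fun w => c - g w) := (differentiable_const c).sub hg₁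
  have hfirst : (fun w => fderiv ℝ (fun u => ‖c - g u‖ ^ 2) w y) =
      fun w => -2 * ⟪c - g w, fderiv ℝ g w y⟫ := by
    funext w
    rw [((hasFDerivAt_const c w).fun_sub (hg₁ w).hasFDerivAt).norm_sq.fderiv]
    simp only [_root_.smul_apply, ContinuousLinearMap.comp_apply, zero_sub, _root_.neg_apply,
      innerSL_apply_apply, inner_neg_right]
    ring
  rw [hfirst, fderiv_const_mul ((hres v).inner ℝ (hg.differentiable_fderiv_apply y v)) (-2),
    _root_.smul_apply, fderiv_inner_apply ℝ (hres v) (hg.differentiable_fderiv_apply y v),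
    fderiv_const_sub, _root_.neg_apply, inner_neg_left, smul_eq_mul]
  ring

variable {Ω : Type*} [MeasurableSpace Ω] {μ : Measure Ω} [IsProbabilityMeasure μ]
  {g : E → F} {X : Ω → F}

theorem integrable_fderiv_fderiv_norm_sub_sq (hg : ContDiff ℝ 2 g) (hX : Integrable X μ)
    (v x y : E) :
    Integrable (fun ω => fderiv ℝ (fun w => fderiv ℝ (fun u => ‖X ω - g u‖ ^ 2) w y) v x) μ := by
  simp_rw [fderiv_fderiv_norm_sub_sq hg]
  exact (integrable_const _).sub
    (((hX.sub (integrable_const (g v))).inner_const _).const_mul 2)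

theorem integral_fderiv_fderiv_norm_sub_sq [CompleteSpace F] (hg : ContDiff ℝ 2 g)
    (hX : Integrable X μ) {v : E} (hmean : ∫ ω, X ω ∂μ = g v) (x y : E) :
    ∫ ω, fderiv ℝ (fun w => fderiv ℝ (fun u => ‖X ω - g u‖ ^ 2) w y) v x ∂μ =
      2 * ⟪fderiv ℝ g v x, fderiv ℝ g v y⟫ := by
  have hres : Integrable (fun ω => X ω - g v) μ := hX.sub (integrable_const (g v))
  have hcentered (z : F) : ∫ ω, ⟪X ω - g v, z⟫ ∂μ = 0 := by
    simp_rw [real_inner_comm z]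
    rw [integral_inner hres, integral_sub hX (integrable_const _), hmean, integral_const,
      probReal_univ, one_smul, sub_self, inner_zero_right]
  simp_rw [fderiv_fderiv_norm_sub_sq hg]
  rw [integral_sub (integrable_const _) ((hres.inner_const _).const_mul 2), integral_const,
    probReal_univ, one_smul, integral_const_mul, hcentered, mul_zero, sub_zero]

theorem integral_fderiv_fderiv_sum_norm_sub_sq [CompleteSpace F] {ι : Type*} [Fintype ι]
    {g : ι → E → F} (hg : ∀ m, ContDiff ℝ 2 (g m)) {X : ι → Ω → F}
    (hX : ∀ m, Integrable (X m) μ) {v : E} (hmean : ∀ m, ∫ ω, X m ω ∂μ = g m v) (x y : E) :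
    ∫ ω, fderiv ℝ (fun w => fderiv ℝ (fun u => ∑ m, ‖X m ω - g m u‖ ^ 2) w y) v x ∂μ =
      2 * ∑ m, ⟪fderiv ℝ (g m) v x, fderiv ℝ (g m) v y⟫ := by
  have hsq (ω : Ω) (m : ι) : ContDiff ℝ 2 (fun u => ‖X m ω - g m u‖ ^ 2) :=
    (contDiff_const.sub (hg m)).norm_sq ℝ
  simp_rw [fderiv_fderiv_finset_sum _ fun m _ => hsq _ m]
  rw [integral_finsetSum _ fun m _ => integrable_fderiv_fderiv_norm_sub_sq (hg m) (hX m) v x y,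
    Finset.mul_sum]
  exact Finset.sum_congr rfl fun m _ =>
    integral_fderiv_fderiv_norm_sub_sq (hg m) (hX m) (hmean m) x y

end SquaredResidual

section MatrixEntries

variable {E : Type*} [NormedAddCommGroup E] [NormedSpace ℝ E]
  {l m n : Type*} [Fintype l] [Fintype m]

noncomputable def Matrix.mulRightEntryCLM (B : Matrix m n ℂ) (p : l) (q : n) :
    Matrix l m ℂ →L[ℝ] ℂ :=
  LinearMap.toContinuousLinearMap (entryLinearMap ℝ ℂ p q ∘ₗ mulRightLinearMap l ℝ B)

theorem ContDiff.matrix_mul_const_apply {k : WithTop ℕ∞} {A : E → Matrix l m ℂ}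
    (hA : ContDiff ℝ k A) (B : Matrix m n ℂ) (p : l) (q : n) :
    ContDiff ℝ k (fun w => (A w * B) p q) :=
  (mulRightEntryCLM B p q).contDiff.comp hA

theorem fderiv_matrix_mul_const_apply {A : E → Matrix l m ℂ} {v : E}
    (hA : DifferentiableAt ℝ A v) (B : Matrix m n ℂ) (p : l) (q : n) (x : E) :
    fderiv ℝ (fun w => (A w * B) p q) v x = (fderiv ℝ A v x * B) p q := by
  have h : HasFDerivAt (fun w => (A w * B) p q)
      ((mulRightEntryCLM B p q).comp (fderiv ℝ A v)) v :=
    (mulRightEntryCLM B p q).hasFDerivAt.comp v hA.hasFDerivAt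
  rw [h.fderiv]
  rfl

theorem Matrix.re_trace_mul_mul_conjTranspose [Fintype n] (P Q : Matrix l m ℂ)
    (B : Matrix m n ℂ) :
    (trace (P * (B * Bᴴ) * Qᴴ)).re = ∑ p, ∑ q, ⟪(P * B) p q, (Q * B) p q⟫ := by
  rw [show P * (B * Bᴴ) * Qᴴ = P * B * (Q * B)ᴴ by
    simp only [conjTranspose_mul, Matrix.mul_assoc]]
  simp only [trace, diag_apply, mul_apply, conjTranspose_apply, Complex.star_def, Complex.re_sum]
  refine Finset.sum_congr rfl fun p _ => Finset.sum_congr rfl fun q _ => ?_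
  rw [real_inner_comm, Complex.inner]

end MatrixEntries

theorem expected_hessian_fisher_information_general (K M : ℕ)
    {Ω : Type*} [MeasurableSpace Ω] (μ : Measure Ω) [IsProbabilityMeasure μ]
    (B : Fin K → Matrix (Fin M) (Fin M) ℂ)
    (A : Fin K → (Fin 3 → ℝ) → Matrix (Fin M) (Fin M) ℂ)
    (hA : ∀ k, ContDiff ℝ 2 (A k))
    (Ξ : Fin K → Ω → Matrix (Fin M) (Fin M) ℂ)
    (hΞInt : ∀ k p q, Integrable (fun ω => Ξ k ω p q) μ)
    (v₀ : Fin 3 → ℝ)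
    (hmean : ∀ k p q, ∫ ω, Ξ k ω p q ∂μ = (A k v₀ * B k) p q)
    (f : (Fin 3 → ℝ) → Ω → ℝ)
    (hf : ∀ v ω, f v ω = ∑ k, ∑ p, ∑ q, ‖(Ξ k ω - A k v * B k) p q‖ ^ 2)
    (i j : Fin 3) :
    ∫ ω, pd i (pd j (fun v => f v ω)) v₀ ∂μ =
      2 * (∑ k, Matrix.trace
        (mpd i (A k) v₀ * (B k * (B k)ᴴ) * (mpd j (A k) v₀)ᴴ)).re := by
  have hentries (ω : Ω) : (fun v => f v ω) = fun v => ∑ m : Fin K × Fin M × Fin M,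
      ‖Ξ m.1 ω m.2.1 m.2.2 - (A m.1 v * B m.1) m.2.1 m.2.2‖ ^ 2 := funext fun v => by
    simp only [hf, Fintype.sum_prod_type, Matrix.sub_apply]
  unfold pd
  simp only [hentries]
  refine (integral_fderiv_fderiv_sum_norm_sub_sq (ι := Fin K × Fin M × Fin M)
    (X := fun m ω => Ξ m.1 ω m.2.1 m.2.2) (g := fun m v => (A m.1 v * B m.1) m.2.1 m.2.2)
    (fun m => (hA m.1).matrix_mul_const_apply _ _ _) (fun m => hΞInt m.1 m.2.1 m.2.2)
    (fun m => hmean m.1 m.2.1 m.2.2) (Pi.single i 1) (Pi.single j 1)).trans ?_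
  simp only [fderiv_matrix_mul_const_apply ((hA _).differentiable two_ne_zero _), Complex.re_sum,
    re_trace_mul_mul_conjTranspose, mpd, Fintype.sum_prod_type, Finset.mul_sum]

/-- **Theorem 1 (Fisher information).** With `f(v, ω) = Σ_k ‖Ξ_k(ω) − A_k(v) B_k‖_F²`,
`A_k` twice continuously differentiable, and entrywise integrable `Ξ_k` satisfying
`E[Ξ_k] = A_k(v₀) B_k`, the expected Hessian at `v₀` is
`E[∂²f/∂v_i∂v_j (v₀, ·)] = 2 Σ_k Re tr(∂_i A_k(v₀) · B_k B_kᴴ · (∂_j A_k(v₀))ᴴ)`. -/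
theorem expected_hessian_fisher_information (K M : ℕ) (hK : 1 ≤ K) (hM : 1 ≤ M)
    {Ω : Type*} [MeasurableSpace Ω] (μ : Measure Ω) [IsProbabilityMeasure μ]
    (B : Fin K → Matrix (Fin M) (Fin M) ℂ)
    (A : Fin K → (Fin 3 → ℝ) → Matrix (Fin M) (Fin M) ℂ)
    (hA : ∀ k, ContDiff ℝ 2 (A k))
    (Ξ : Fin K → Ω → Matrix (Fin M) (Fin M) ℂ)
    (hΞInt : ∀ k p q, Integrable (fun ω => Ξ k ω p q) μ)
    (v₀ : Fin 3 → ℝ)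
    (hmean : ∀ k p q, ∫ ω, Ξ k ω p q ∂μ = (A k v₀ * B k) p q)
    (f : (Fin 3 → ℝ) → Ω → ℝ)
    (hf : ∀ v ω, f v ω = ∑ k, ∑ p, ∑ q, ‖(Ξ k ω - A k v * B k) p q‖ ^ 2)
    (i j : Fin 3) :
    ∫ ω, pd i (pd j (fun v => f v ω)) v₀ ∂μ =
      2 * (∑ k, Matrix.trace
        (mpd i (A k) v₀ * (B k * (B k)ᴴ) * (mpd j (A k) v₀)ᴴ)).re :=
  expected_hessian_fisher_information_general K M μ B A hA Ξ hΞInt v₀ hmean f hf i j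
end

section
/- Let K ≥ 1, M, I ≥ 1, and fix T > 0, ε > 0, and noise levels ς_k > 0 for k = 1,…,K. Let C_k ∈ ℂ^{M×I} and, for each i ∈ {1,2,3} and each k, let A_k^i ∈ ℂ^{M×M} be matrices satisfying Σ_{i=1}^{3} ‖A_k^i‖_F² ≤ T/(ε ς_k²) for every k. Define the 3×3 matrix J by [J]_{ij} = Σ_{k=1}^K tr(A_k^i C_k C_kᴴ (A_k^j)ᴴ), and set E = Σ_{k=1}^K ‖C_k‖_F² and σ̄² = (Σ_{k=1}^K ς_k^{-2})^{-1}. If J is Hermitian positive definite and E > 0, then Re tr(J⁻¹) ≥ 9 ε σ̄² / (T · E). In particular, with ϱ = 9ε, the Cramér–Rao bound tr(J⁻¹) is bounded below by the universal quantity CRB_L = ϱ σ̄² / (T · Σ_k ‖C_k‖_F²), which does not depend on the target position. -/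
/-! AM–HM applied to the eigenvalues of the positive definite `J` gives `9 ≤ tr J · tr J⁻¹`.
Each diagonal entry `J i i = Σ_k ‖A_k^i C_k‖_F²` is controlled by submultiplicativity of the
Frobenius norm, so the hypothesis on the `A_k^i` bounds `tr J` by `(T / ε) · E · Σ_k ς_k⁻²`. -/

open Matrix BigOperators
open scoped ComplexOrder

/-- Frobenius norm of a complex matrix. -/
noncomputable def frobNorm {m n : ℕ} (A : Matrix (Fin m) (Fin n) ℂ) : ℝ :=
  Real.sqrt (∑ i, ∑ j, ‖A i j‖ ^ 2)

lemma Finset.card_sq_le_sum_mul_sum_inv {ι : Type*} (s : Finset ι) {w : ι → ℝ}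
    (hw : ∀ i ∈ s, 0 < w i) : (s.card : ℝ) ^ 2 ≤ (∑ i ∈ s, w i) * ∑ i ∈ s, (w i)⁻¹ := by
  simpa using Finset.sum_sq_le_sum_mul_sum_of_sq_le_mul s (r := fun _ ↦ 1)
    (fun i hi ↦ (hw i hi).le) (fun i hi ↦ (inv_pos.2 (hw i hi)).le)
    (fun i hi ↦ by rw [one_pow, mul_inv_cancel₀ (hw i hi).ne'])

lemma Finset.sum_mul_le_sum_mul_sum {ι : Type*} (s : Finset ι) {f g : ι → ℝ}
    (hf : ∀ i ∈ s, 0 ≤ f i) (hg : ∀ i ∈ s, 0 ≤ g i) :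
    ∑ i ∈ s, f i * g i ≤ (∑ i ∈ s, f i) * ∑ i ∈ s, g i := by
  rw [Finset.sum_mul]
  exact Finset.sum_le_sum fun i hi ↦
    mul_le_mul_of_nonneg_left (Finset.single_le_sum hg hi) (hf i hi)

namespace Matrix

variable {𝕜 : Type*} [RCLike 𝕜] {n : Type*} [Fintype n] [DecidableEq n]

lemma IsHermitian.trace_cfc {A : Matrix n n 𝕜} (hA : A.IsHermitian) (f : ℝ → ℝ) :
    (cfc f A).trace = ∑ i, (f (hA.eigenvalues i) : 𝕜) := by
  rw [hA.cfc_eq, IsHermitian.cfc, Unitary.conjStarAlgAut_apply, trace_mul_cycle,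
    Unitary.coe_star_mul_self, one_mul, trace_diagonal]
  rfl

lemma PosDef.trace_inv {A : Matrix n n 𝕜} (hA : A.PosDef) :
    A⁻¹.trace = ∑ i, ((hA.isHermitian.eigenvalues i)⁻¹ : 𝕜) := by
  rw [nonsing_inv_eq_ringInverse,
    ← cfc_ringInverse_id (R := ℝ) A hA.isUnit hA.isHermitian.isSelfAdjoint,
    hA.isHermitian.trace_cfc]
  simp only [RCLike.ofReal_inv]

lemma PosDef.card_sq_le_re_trace_mul_re_trace_inv {A : Matrix n n 𝕜} (hA : A.PosDef) :
    (Fintype.card n : ℝ) ^ 2 ≤ RCLike.re A.trace * RCLike.re A⁻¹.trace := by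
  have hpos := hA.eigenvalues_pos
  rw [hA.isHermitian.trace_eq_sum_eigenvalues, hA.trace_inv, map_sum, map_sum]
  simp only [RCLike.ofReal_re, ← RCLike.ofReal_inv]
  exact Finset.card_sq_le_sum_mul_sum_inv Finset.univ fun i _ ↦ hpos i

end Matrix

section frobNorm

variable {m n : ℕ}

lemma frobNorm_sq (A : Matrix (Fin m) (Fin n) ℂ) : frobNorm A ^ 2 = ∑ i, ∑ j, ‖A i j‖ ^ 2 :=
  Real.sq_sqrt (by positivity)

attribute [local instance] Matrix.frobeniusNormedAddCommGroup in
lemma frobNorm_eq_norm (A : Matrix (Fin m) (Fin n) ℂ) : frobNorm A = ‖A‖ := by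
  rw [frobNorm, frobenius_norm_def, Real.sqrt_eq_rpow]
  simp only [Real.rpow_two]

attribute [local instance] Matrix.frobeniusNormedAddCommGroup in
lemma frobNorm_mul_le {p : ℕ} (A : Matrix (Fin m) (Fin n) ℂ) (B : Matrix (Fin n) (Fin p) ℂ) :
    frobNorm (A * B) ≤ frobNorm A * frobNorm B := by
  simpa only [frobNorm_eq_norm] using frobenius_norm_mul A B

lemma re_trace_mul_conjTranspose_self (A : Matrix (Fin m) (Fin n) ℂ) :
    (A * Aᴴ).trace.re = frobNorm A ^ 2 := by
  simp [frobNorm_sq, trace, mul_apply, Complex.mul_conj, Complex.normSq_eq_norm_sq,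
    -Complex.ofReal_pow]

lemma frobNorm_nonneg (A : Matrix (Fin m) (Fin n) ℂ) : 0 ≤ frobNorm A :=
  Real.sqrt_nonneg _

lemma re_trace_mul_mul_conjTranspose_le {p : ℕ} (A : Matrix (Fin m) (Fin m) ℂ)
    (B : Matrix (Fin m) (Fin p) ℂ) :
    (A * B * Bᴴ * Aᴴ).trace.re ≤ frobNorm A ^ 2 * frobNorm B ^ 2 := by
  have hAB : A * B * Bᴴ * Aᴴ = (A * B) * (A * B)ᴴ := by
    rw [conjTranspose_mul]
    simp only [Matrix.mul_assoc]
  rw [hAB, re_trace_mul_conjTranspose_self, ← mul_pow]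
  exact pow_le_pow_left₀ (frobNorm_nonneg _) (frobNorm_mul_le A B) 2

end frobNorm

lemma re_trace_le_sum_frobNorm_sq {ι κ : Type*} [Fintype ι] [Fintype κ] {m n : ℕ}
    (A : κ → ι → Matrix (Fin m) (Fin m) ℂ) (C : κ → Matrix (Fin m) (Fin n) ℂ)
    {J : Matrix ι ι ℂ} (hJ : ∀ i, J i i = ∑ k, (A k i * (C k * (C k)ᴴ) * (A k i)ᴴ).trace) :
    J.trace.re ≤ ∑ k, (∑ i, frobNorm (A k i) ^ 2) * frobNorm (C k) ^ 2 := by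
  calc J.trace.re = ∑ i, ∑ k, (A k i * C k * (C k)ᴴ * (A k i)ᴴ).trace.re := by
        simp only [trace, diag, hJ, Complex.re_sum, Matrix.mul_assoc]
    _ ≤ ∑ i, ∑ k, frobNorm (A k i) ^ 2 * frobNorm (C k) ^ 2 := by
        gcongr with i _ k
        exact re_trace_mul_mul_conjTranspose_le _ _
    _ = _ := by
        rw [Finset.sum_comm]
        simp only [Finset.sum_mul]

theorem crb_universal_lower_bound_general (K M I : ℕ) (hK : 1 ≤ K)
    (T ε : ℝ) (hT : 0 < T) (hε : 0 < ε)
    (ς : Fin K → ℝ) (hς : ∀ k, 0 < ς k)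
    (C : Fin K → Matrix (Fin M) (Fin I) ℂ)
    (A : Fin K → Fin 3 → Matrix (Fin M) (Fin M) ℂ)
    (hA : ∀ k, ∑ i : Fin 3, frobNorm (A k i) ^ 2 ≤ T / (ε * ς k ^ 2))
    (J : Matrix (Fin 3) (Fin 3) ℂ)
    (hJ : ∀ i j : Fin 3,
      J i j = ∑ k, Matrix.trace (A k i * (C k * (C k)ᴴ) * (A k j)ᴴ))
    (hJpd : J.PosDef)
    (E : ℝ) (hE : E = ∑ k, frobNorm (C k) ^ 2) (hEpos : 0 < E) :
    (Matrix.trace J⁻¹).re ≥ 9 * ε * (∑ k, ((ς k) ^ 2)⁻¹)⁻¹ / (T * E) := by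
  set S := ∑ k, (ς k ^ 2)⁻¹
  have hS : 0 < S :=
    Finset.sum_pos (fun k _ ↦ by have := hς k; positivity) ⟨⟨0, hK⟩, Finset.mem_univ _⟩
  have htrace : J.trace.re ≤ T / ε * E * S := calc
    J.trace.re ≤ ∑ k, (∑ i, frobNorm (A k i) ^ 2) * frobNorm (C k) ^ 2 :=
        re_trace_le_sum_frobNorm_sq A C fun i ↦ hJ i i
    _ ≤ ∑ k, T / (ε * ς k ^ 2) * frobNorm (C k) ^ 2 := by
        gcongr with k
        exact hA k
    _ ≤ (∑ k, T / (ε * ς k ^ 2)) * E := hE ▸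
        Finset.sum_mul_le_sum_mul_sum _ (fun k _ ↦ by positivity) (fun k _ ↦ by positivity)
    _ = T / ε * E * S := by
        simp only [S, Finset.mul_sum, Finset.sum_mul]
        exact Finset.sum_congr rfl fun k _ ↦ by ring
  have hinv : 0 < J⁻¹.trace.re := (Complex.pos_iff.1 hJpd.inv.trace_pos).1
  have hAMHM : (9 : ℝ) ≤ J.trace.re * J⁻¹.trace.re := by
    simpa [show (3 : ℝ) ^ 2 = 9 by norm_num] using hJpd.card_sq_le_re_trace_mul_re_trace_inv
  rw [ge_iff_le]
  calc 9 * ε * S⁻¹ / (T * E) = 9 / (T / ε * E * S) := by field_simp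
    _ ≤ J⁻¹.trace.re := (div_le_iff₀ (by positivity)).2 <| by
        linarith [mul_le_mul_of_nonneg_right htrace hinv.le]

/-- **Theorem 2 (universal lower bound on the Cramér–Rao bound).**
If the scaled array-response derivatives satisfy `Σ_i ‖A_k^i‖_F² ≤ T/(ε ς_k²)` and
`[J]_{ij} = Σ_k tr(A_k^i C_k C_kᴴ (A_k^j)ᴴ)` is Hermitian positive definite, then
`Re tr(J⁻¹) ≥ 9 ε σ̄² / (T · E)` with `E = Σ_k ‖C_k‖_F²` and `σ̄² = (Σ_k ς_k⁻²)⁻¹`. -/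
theorem crb_universal_lower_bound (K M I : ℕ) (hK : 1 ≤ K) (hM : 1 ≤ M) (hI : 1 ≤ I)
    (T ε : ℝ) (hT : 0 < T) (hε : 0 < ε)
    (ς : Fin K → ℝ) (hς : ∀ k, 0 < ς k)
    (C : Fin K → Matrix (Fin M) (Fin I) ℂ)
    (A : Fin K → Fin 3 → Matrix (Fin M) (Fin M) ℂ)
    (hA : ∀ k, ∑ i : Fin 3, frobNorm (A k i) ^ 2 ≤ T / (ε * ς k ^ 2))
    (J : Matrix (Fin 3) (Fin 3) ℂ)
    (hJ : ∀ i j : Fin 3,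
      J i j = ∑ k, Matrix.trace (A k i * (C k * (C k)ᴴ) * (A k j)ᴴ))
    (hJpd : J.PosDef)
    (E : ℝ) (hE : E = ∑ k, frobNorm (C k) ^ 2) (hEpos : 0 < E) :
    (Matrix.trace J⁻¹).re ≥ 9 * ε * (∑ k, ((ς k) ^ 2)⁻¹)⁻¹ / (T * E) :=
  crb_universal_lower_bound_general K M I hK T ε hT hε ς hς C A hA J hJ hJpd E hE hEpos
end
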